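/- For the Gaussian f_T(x₁) = exp(πi x₁ᵗTx₁) with Im T positive definite, and the Heisenberg representation (π_{(h₁,h₂)} f)(x₁) = exp(2πi x₁ᵗh₂ + πi h₁ᵗh₂) f(x₁+h₁), the L² inner product satisfies ⟨f_T, π_h f_T⟩ = (2ⁿ det(Im T))^{-1/2} · exp(−(π/2) H(h̲,h̲)), where h̲ = Th₁ + h₂ and H(g̲,h̲) = g̲ᵗ (Im T)^{-1} conj(h̲). -/

import Mathlib

/-
Up to the phase `exp(-πi h₁ᵗh̲*)`, the integrand is the complex Gaussian
`exp(-2π xᵗ(Im T)x - 2πi xᵗh̲*)`: symmetry of `T` merges the two cross terms of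
`(x+h₁)ᵗ conj(T) (x+h₁)`, and `T - conj T = 2i Im T`. Substituting `x = (Im T)^{-1/2} y` splits
it into one-dimensional Gaussian integrals, which gives
`det(2 Im T)^{-1/2} exp(-(π/2) h̲*ᵗ(Im T)⁻¹h̲*)`. Finally `h̲ = h̲* + 2i (Im T) h₁` turns the
total exponent into `-(π/2) H(h̲,h̲)`.
-/

open Real Complex Matrix MeasureTheory

noncomputable section

def cvec {n : ℕ} (v : Fin n → ℝ) : Fin n → ℂ := fun i => (v i : ℂ)

/-- `h̲ = T h₁ + h₂`. -/
def uVec {n : ℕ} (T : Matrix (Fin n) (Fin n) ℂ) (h : (Fin n → ℝ) × (Fin n → ℝ)) :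
    Fin n → ℂ :=
  T.mulVec (cvec h.1) + cvec h.2

/-- `h̲* = conj(T) h₁ + h₂`. -/
def uVecStar {n : ℕ} (T : Matrix (Fin n) (Fin n) ℂ) (h : (Fin n → ℝ) × (Fin n → ℝ)) :
    Fin n → ℂ :=
  (T.map (starRingEnd ℂ)).mulVec (cvec h.1) + cvec h.2

/-- `H(g̲,h̲) = g̲ᵗ (Im T)⁻¹ h̲*`. -/
def Hform {n : ℕ} (T : Matrix (Fin n) (Fin n) ℂ)
    (g h : (Fin n → ℝ) × (Fin n → ℝ)) : ℂ :=
  dotProduct (uVec T g) ((((T.map Complex.im)⁻¹).map (fun r => (r : ℂ))).mulVec (uVecStar T h))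

/-- The Gaussian theta vector `f_T(x₁) = exp(πi x₁ᵗ T x₁)`. -/
def gaussian {n : ℕ} (T : Matrix (Fin n) (Fin n) ℂ) (x : Fin n → ℝ) : ℂ :=
  Complex.exp ((π : ℂ) * Complex.I * dotProduct (cvec x) (T.mulVec (cvec x)))

/-- The Heisenberg representation. -/
def heisRep {n : ℕ} (y : (Fin n → ℝ) × (Fin n → ℝ)) (f : (Fin n → ℝ) → ℂ)
    (x₁ : Fin n → ℝ) : ℂ :=
  Complex.exp (2 * (π : ℂ) * Complex.I * dotProduct (cvec x₁) (cvec y.2) +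
    (π : ℂ) * Complex.I * dotProduct (cvec y.1) (cvec y.2)) * f (x₁ + y.1)

open ComplexConjugate

theorem integral_comp_mulVec {ι E : Type*} [Fintype ι] [DecidableEq ι] [NormedAddCommGroup E]
    [NormedSpace ℝ E] {M : Matrix ι ι ℝ} (hM : M.det ≠ 0) (f : (ι → ℝ) → E) :
    ∫ x, f (M *ᵥ x) = |M.det|⁻¹ • ∫ x, f x := by
  let e := (Matrix.toLinearEquiv' M (invertibleOfIsUnitDet M hM.isUnit)).toContinuousLinearEquiv
  have := e.toHomeomorph.measurableEmbedding.integral_map (μ := volume) f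
  change ∫ x, f x ∂(Measure.map (Matrix.toLin' M) volume) = ∫ x, f (M *ᵥ x) at this
  rw [← this, Real.map_matrix_volume_pi_eq_smul_volume_pi hM, integral_smul_measure,
    ENNReal.toReal_ofReal (by positivity), abs_inv]

open scoped MatrixOrder in
theorem Matrix.PosDef.exists_inv_sqrt {ι : Type*} [Fintype ι] [DecidableEq ι] {S : Matrix ι ι ℝ}
    (hS : S.PosDef) :
    ∃ B : Matrix ι ι ℝ, Bᵀ = B ∧ B * (S * B) = 1 ∧ B * B = S⁻¹ ∧ B.det = (√S.det)⁻¹ := by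
  set A := CFC.sqrt S
  have hAt : Aᵀ = A := (CFC.sqrt_nonneg S).posSemidef.isHermitian
  have hAA : A * A = S := CFC.sqrt_mul_sqrt_self S hS.posSemidef.nonneg
  have hdetA : A.det = √S.det := by simpa using hS.posSemidef.det_sqrt
  have hA : IsUnit A.det := (hdetA ▸ Real.sqrt_pos.mpr hS.det_pos).ne'.isUnit
  refine ⟨A⁻¹, by rw [transpose_nonsing_inv, hAt], ?_, by rw [← hAA, Matrix.mul_inv_rev], by
    rw [det_nonsing_inv, Ring.inverse_eq_inv', hdetA]⟩
  rw [← hAA, show A⁻¹ * (A * A * A⁻¹) = (A⁻¹ * A) * (A * A⁻¹) by noncomm_ring,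
    nonsing_inv_mul A hA, mul_nonsing_inv A hA, one_mul]

theorem integral_cexp_neg_pi_dotProduct_mulVec_add {ι : Type*} [Fintype ι] [DecidableEq ι]
    {S : Matrix ι ι ℝ} (hS : S.PosDef) (c : ι → ℂ) :
    ∫ x : ι → ℝ, cexp (-π * ↑(x ⬝ᵥ S *ᵥ x) + c ⬝ᵥ (ofReal ∘ x)) =
      (√S.det)⁻¹ * cexp (c ⬝ᵥ S⁻¹.map ofReal *ᵥ c / (4 * π)) := by
  obtain ⟨B, hBt, hBSB, hBB, hdetB⟩ := hS.exists_inv_sqrt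
  have hdet_pos : 0 < √S.det := Real.sqrt_pos.mpr hS.det_pos
  have hB : B.det ≠ 0 := hdetB ▸ inv_ne_zero hdet_pos.ne'
  set d := c ᵥ* B.map ofReal
  have hquad (y : ι → ℝ) : (B *ᵥ y) ⬝ᵥ S *ᵥ (B *ᵥ y) = ∑ i, y i ^ 2 := by
    simp only [dotProduct_mulVec]
    rw [← vecMul_transpose B y, hBt, vecMul_vecMul, vecMul_vecMul, hBSB, vecMul_one]
    simp [dotProduct, sq]
  have hlin (y : ι → ℝ) : c ⬝ᵥ (ofReal ∘ (B *ᵥ y)) = ∑ i, d i * y i := by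
    have : ofReal ∘ (B *ᵥ y) = B.map ofReal *ᵥ (ofReal ∘ y) :=
      funext (RingHom.map_mulVec ofRealHom B y)
    rw [this]
    exact dotProduct_mulVec c _ _
  have hconst : ∑ i, d i ^ 2 = c ⬝ᵥ S⁻¹.map ofReal *ᵥ c := by
    have : (B * B).map ofReal = B.map ofReal * B.map ofReal := Matrix.map_mul (f := ofRealHom)
    have hBct : (B.map ofReal)ᵀ = B.map ofReal := by rw [← transpose_map, hBt]
    rw [← hBB, this, ← mulVec_mulVec, dotProduct_mulVec, ← vecMul_transpose, hBct]
    simp only [d, dotProduct, sq]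
  set f : (ι → ℝ) → ℂ := fun x ↦ cexp (-π * ↑(x ⬝ᵥ S *ᵥ x) + c ⬝ᵥ (ofReal ∘ x))
  calc ∫ x, f x = |B.det| • ∫ y, f (B *ᵥ y) := by
        rw [integral_comp_mulVec hB, smul_inv_smul₀ (abs_ne_zero.mpr hB)]
    _ = |B.det| • ∫ y : ι → ℝ, cexp (-π * ∑ i, (y i : ℂ) ^ 2 + ∑ i, d i * y i) := by
        simp only [f, hquad, hlin]
        push_cast
        rfl
    _ = _ := by
        rw [GaussianFourier.integral_cexp_neg_mul_sum_add (by simpa using pi_pos), hconst,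
          div_self (ofReal_ne_zero.mpr pi_ne_zero), one_cpow, one_mul, hdetB,
          abs_of_pos (inv_pos.mpr hdet_pos), Complex.real_smul]

theorem self_sub_map_conj {ι : Type*} (T : Matrix ι ι ℂ) :
    T - T.map conj = (2 * I) • (T.map im).map ofReal := by
  ext j k
  simp only [Matrix.sub_apply, map_apply, Matrix.smul_apply, smul_eq_mul, sub_conj]
  push_cast
  ring

theorem map_ofReal_mul_map_ofReal_inv {ι : Type*} [Fintype ι] [DecidableEq ι] {S : Matrix ι ι ℝ}
    (hS : IsUnit S.det) : S.map ofReal * S⁻¹.map ofReal = 1 :=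
  calc _ = (S * S⁻¹).map ofRealHom := (Matrix.map_mul).symm
    _ = 1 := by rw [mul_nonsing_inv _ hS, Matrix.map_one _ (map_zero _) (map_one _)]

variable {n : ℕ}

theorem conj_cvec_dotProduct_mulVec (a b : Fin n → ℝ) (M : Matrix (Fin n) (Fin n) ℂ) :
    conj (cvec a ⬝ᵥ M *ᵥ cvec b) = cvec a ⬝ᵥ M.map conj *ᵥ cvec b := by
  simp [dotProduct, mulVec, cvec, map_sum]

theorem conj_cvec_dotProduct_cvec (a b : Fin n → ℝ) :
    conj (cvec a ⬝ᵥ cvec b) = cvec a ⬝ᵥ cvec b := by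
  simp [dotProduct, cvec, map_sum]

theorem ofReal_dotProduct_mulVec (a b : Fin n → ℝ) (M : Matrix (Fin n) (Fin n) ℝ) :
    ((a ⬝ᵥ M *ᵥ b : ℝ) : ℂ) = cvec a ⬝ᵥ M.map ofReal *ᵥ cvec b := by
  simp [dotProduct, mulVec, cvec]

theorem cvec_add (a b : Fin n → ℝ) : cvec (a + b) = cvec a + cvec b :=
  funext fun i ↦ ofReal_add (a i) (b i)

theorem uVec_eq_uVecStar_add (T : Matrix (Fin n) (Fin n) ℂ) (h : (Fin n → ℝ) × (Fin n → ℝ)) :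
    uVec T h = uVecStar T h + (2 * I) • ((T.map im).map ofReal *ᵥ cvec h.1) := by
  rw [uVec, uVecStar, ← smul_mulVec, ← self_sub_map_conj, sub_mulVec]
  abel

theorem Hform_self_eq {T : Matrix (Fin n) (Fin n) ℂ} (hT : T.IsSymm) (hS : IsUnit (T.map im).det)
    (h : (Fin n → ℝ) × (Fin n → ℝ)) :
    Hform T h h = uVecStar T h ⬝ᵥ (T.map im)⁻¹.map ofReal *ᵥ uVecStar T h +
      2 * I * (cvec h.1 ⬝ᵥ uVecStar T h) := by
  set S := T.map im
  have hSc : (S.map ofReal)ᵀ = S.map ofReal := by rw [← transpose_map, (hT.map im).eq]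
  rw [Hform, uVec_eq_uVecStar_add, add_dotProduct, smul_dotProduct, smul_eq_mul,
    ← vecMul_transpose (S.map ofReal) (cvec h.1), ← dotProduct_mulVec, mulVec_mulVec, hSc,
    map_ofReal_mul_map_ofReal_inv hS, one_mulVec]

theorem gaussian_mul_conj_heisRep {T : Matrix (Fin n) (Fin n) ℂ} (hT : T.IsSymm)
    (h : (Fin n → ℝ) × (Fin n → ℝ)) (x : Fin n → ℝ) :
    gaussian T x * conj (heisRep h (gaussian T) x) =
      cexp (-(π * I) * (cvec h.1 ⬝ᵥ uVecStar T h)) *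
        cexp (-π * ↑(x ⬝ᵥ ((2 : ℝ) • T.map im) *ᵥ x) +
          (-(2 * π * I) • uVecStar T h) ⬝ᵥ (ofReal ∘ x)) := by
  simp only [gaussian, heisRep, ← Complex.exp_conj, ← Complex.exp_add]
  congr 1
  simp only [map_add, map_mul, conj_I, conj_ofReal, map_ofNat, conj_cvec_dotProduct_cvec,
    conj_cvec_dotProduct_mulVec]
  rw [cvec_add, smul_dotProduct, smul_eq_mul, smul_mulVec, dotProduct_smul, smul_eq_mul, ofReal_mul,
    ofReal_dotProduct_mulVec, ofReal_ofNat, uVecStar, show ofReal ∘ x = cvec x from rfl]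
  set X := cvec x
  set H₁ := cvec h.1
  set H₂ := cvec h.2
  set Tc := T.map conj
  have hTc : Tcᵀ = Tc := (hT.map conj).eq
  have hquad : (X + H₁) ⬝ᵥ Tc *ᵥ (X + H₁) =
      X ⬝ᵥ Tc *ᵥ X + 2 * (X ⬝ᵥ Tc *ᵥ H₁) + H₁ ⬝ᵥ Tc *ᵥ H₁ := by
    have : H₁ ⬝ᵥ Tc *ᵥ X = X ⬝ᵥ Tc *ᵥ H₁ := by
      rw [dotProduct_mulVec, ← mulVec_transpose, hTc, dotProduct_comm]
    rw [mulVec_add, dotProduct_add, add_dotProduct, add_dotProduct, this]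
    ring
  have him : X ⬝ᵥ T *ᵥ X - X ⬝ᵥ Tc *ᵥ X = 2 * I * (X ⬝ᵥ (T.map im).map ofReal *ᵥ X) := by
    rw [← dotProduct_sub, ← sub_mulVec, self_sub_map_conj, smul_mulVec, dotProduct_smul,
      smul_eq_mul]
  rw [hquad, dotProduct_add, add_dotProduct, dotProduct_comm (Tc *ᵥ H₁), dotProduct_comm H₂]
  linear_combination π * I * him + 2 * π * (X ⬝ᵥ (T.map im).map ofReal *ᵥ X) * I_sq

/-- `⟨f_T, π_h f_T⟩ = (2ⁿ det(Im T))^{-1/2} · exp(−(π/2) H(h̲,h̲))`. -/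
theorem gaussian_inner_heisRep {n : ℕ} (T : Matrix (Fin n) (Fin n) ℂ)
    (hsymm : T.IsSymm) (hpos : (T.map Complex.im).PosDef)
    (h : (Fin n → ℝ) × (Fin n → ℝ)) :
    ∫ x : Fin n → ℝ, gaussian T x * (starRingEnd ℂ) (heisRep h (gaussian T) x) =
      ((Real.sqrt (2 ^ n * (T.map Complex.im).det))⁻¹ : ℂ) *
        Complex.exp (-((π : ℂ) / 2) * Hform T h h) := by
  set S := T.map im
  have hS : IsUnit S.det := hpos.det_pos.ne'.isUnit
  have hinv : ((2 : ℝ) • S)⁻¹.map ofReal = (2⁻¹ : ℂ) • S⁻¹.map ofReal := by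
    have : ((2 : ℝ) • S)⁻¹ = (2 : ℝ)⁻¹ • S⁻¹ := inv_eq_left_inv <| by
      rw [smul_mul_smul_comm, nonsing_inv_mul _ hS, inv_mul_cancel₀ two_ne_zero, one_smul]
    ext i j
    simp [this]
  simp_rw [gaussian_mul_conj_heisRep hsymm h]
  rw [integral_const_mul, integral_cexp_neg_pi_dotProduct_mulVec_add (hpos.smul two_pos), det_smul,
    Fintype.card_fin, hinv, Hform_self_eq hsymm hS, mul_left_comm, ← Complex.exp_add]
  simp only [smul_mulVec, mulVec_smul, dotProduct_smul, smul_dotProduct, smul_eq_mul, ofReal_inv]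
  congr 2
  have hπ : (π : ℂ) ≠ 0 := ofReal_ne_zero.mpr pi_ne_zero
  field_simp
  linear_combination 4 * (uVecStar T h ⬝ᵥ S⁻¹.map ofReal *ᵥ uVecStar T h) * I_sq
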